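/- Let 1 ≤ d ≤ n be integers and let V be a d-varifold whose mass ‖V‖ is d-regular with constant C₀ ≥ 1. Let (V_i) be a sequence of d-varifolds such that supp V_i ⊆ K × G_{d,n} for a fixed compact set K ⊆ ℝⁿ and such that ∫f dV_i → ∫f dV for every continuous compactly supported f : ℝⁿ × G_{d,n} → ℝ. Then δ(V, V_i) → 0 as i → ∞. -/

import Mathlib

/-!
Vague convergence of measures carried by a fixed compact set loses no mass, so the `V_i` and `V`
are all carried by one compact set; on it the 1-Lipschitz functions bounded by `1` form a totally
bounded family, hence the global flat distance `F_i = Δ_{ℝⁿ×G}(V, V_i)` tends to `0`. Once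
`F_i ≤ 1`, testing against `max 0 (1 - dist(·, B))` shows that `1` is admissible for
`η = η_d(‖V‖, ‖V_i‖)`.

A 1-Lipschitz function vanishing outside `B(x, r) × G` is bounded by `r`, so
`Δ_{B(x,r)×G}(V, V_i) ≤ r (‖V‖(B(x,r)) + ‖V_i‖(B(x,r)))`. For `r ≤ r₀ ≤ 1/2`, `d`-regularity of
`‖V‖` together with the Prokhorov-type comparison at a scale `δ < η + r` bounds both masses by
`c (η + r)^d`, so the quotient in `δ(V, V_i)` is at most `c r₀`; for `r > r₀` it is at most
`F_i / r₀^d`.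
-/

open MeasureTheory
open scoped RealInnerProductSpace

noncomputable section

/-- The Grassmannian `G_{d,n}`, identified with the set of orthogonal projections of rank `d`:
self-adjoint idempotent operators of trace `d` on `ℝⁿ`, metrized by the operator norm. -/
def GrassSet (d n : ℕ) : Set (EuclideanSpace ℝ (Fin n) →L[ℝ] EuclideanSpace ℝ (Fin n)) :=
  {P | (∀ v w : EuclideanSpace ℝ (Fin n), ⟪P v, w⟫ = ⟪v, P w⟫) ∧ P.comp P = P ∧
    LinearMap.trace ℝ (EuclideanSpace ℝ (Fin n))
      (P : EuclideanSpace ℝ (Fin n) →ₗ[ℝ] EuclideanSpace ℝ (Fin n)) = (d : ℝ)}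

instance (d n : ℕ) : MeasurableSpace ↥(GrassSet d n) := borel _
instance (d n : ℕ) : BorelSpace ↥(GrassSet d n) := ⟨rfl⟩

/-- `ℝⁿ × G_{d,n}` with the product metric; a `d`-varifold is a finite Borel measure on it. -/
abbrev VarSpace (d n : ℕ) := EuclideanSpace ℝ (Fin n) × ↥(GrassSet d n)

/-- The mass `‖V‖` of a varifold: pushforward under the first projection. -/
def varMass {d n : ℕ} (V : Measure (VarSpace d n)) : Measure (EuclideanSpace ℝ (Fin n)) :=
  V.map Prod.fst

/-- Support of a Borel measure: points all of whose open neighbourhoods have positive measure. -/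
def msupport {X : Type*} [TopologicalSpace X] [MeasurableSpace X] (μ : Measure X) : Set X :=
  {x | ∀ U : Set X, IsOpen U → x ∈ U → 0 < μ U}

/-- `ν` is `d`-regular (Ahlfors regular) with constant `C₀ ≥ 1`. -/
def IsDRegular {X : Type*} [MeasurableSpace X] [PseudoMetricSpace X]
    (d : ℕ) (C₀ : ℝ) (ν : Measure X) : Prop :=
  ∀ x ∈ msupport ν, ∀ r : ℝ, r ∈ Set.Ioc (0 : ℝ) 2 →
    ENNReal.ofReal (C₀⁻¹ * r ^ d) ≤ ν (Metric.ball x r) ∧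
    ν (Metric.ball x r) ≤ ENNReal.ofReal (C₀ * r ^ d)

/-- Localized bounded Lipschitz (flat) distance on a metric space. -/
def flatDistIn {X : Type*} [MeasurableSpace X] [PseudoMetricSpace X]
    (U : Set X) (μ ν : Measure X) : ℝ :=
  sSup {r | ∃ φ : X → ℝ, LipschitzWith 1 φ ∧ (∀ x, |φ x| ≤ 1) ∧ (∀ x ∉ U, φ x = 0) ∧
    r = (∫ x, φ x ∂μ) - ∫ x, φ x ∂ν}

/-- Modified Prokhorov distance `η_d`. -/
def etaDist {X : Type*} [MeasurableSpace X] [PseudoMetricSpace X]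
    (d : ℕ) (μ ν : Measure X) : ℝ :=
  sInf {δ : ℝ | 0 < δ ∧ ∀ (x : X) (r : ℝ),
    μ (Metric.closedBall x r) ≤
        ν (Metric.thickening δ (Metric.closedBall x r)) + ENNReal.ofReal (δ ^ d) ∧
    ν (Metric.closedBall x r) ≤
        μ (Metric.thickening δ (Metric.closedBall x r)) + ENNReal.ofReal (δ ^ d)}

/-- The `ε`-approximate mean curvature
`H_ε(x,V) = −(d/(nε)) (∫ ρ′(|y−x|/ε) S((y−x)/|y−x|) dV(y,S)) / (∫ ξ(|y−x|/ε) d‖V‖(y))`. -/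
def varH {d n : ℕ} (ρ ξ : ℝ → ℝ) (ε : ℝ) (x : EuclideanSpace ℝ (Fin n))
    (V : Measure (VarSpace d n)) : EuclideanSpace ℝ (Fin n) :=
  (-((d : ℝ) / (n * ε)) / ∫ y, ξ (‖y - x‖ / ε) ∂(varMass V)) •
    ∫ p, (deriv ρ (‖p.1 - x‖ / ε) / ‖p.1 - x‖) •
      ((p.2 : EuclideanSpace ℝ (Fin n) →L[ℝ] EuclideanSpace ℝ (Fin n)) (p.1 - x)) ∂V

/-- The quantity `δ(V,W) = sup_{x ∈ supp ‖V‖, r > 0}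
`Δ_{B(x,r)×G}(V,W) / (η_d(‖V‖,‖W‖) + r)^d`. -/
def varDelta {d n : ℕ} (V W : Measure (VarSpace d n)) : ℝ :=
  sSup {t | ∃ x ∈ msupport (varMass V), ∃ r : ℝ, 0 < r ∧
    t = flatDistIn (Metric.ball x r ×ˢ (Set.univ : Set ↥(GrassSet d n))) V W /
      (etaDist d (varMass V) (varMass W) + r) ^ d}

open Metric Filter Set Topology

section Grassmannian

variable {d n : ℕ}

theorem grassSet_subset_closedBall : GrassSet d n ⊆ closedBall 0 1 := by
  rintro P ⟨hsym, hidem, -⟩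
  rw [mem_closedBall, dist_zero_right]
  refine ContinuousLinearMap.opNorm_le_bound P zero_le_one fun v => ?_
  have hPP : P (P v) = P v := congr($hidem v)
  have hsq : ‖P v‖ ^ 2 = ⟪v, P v⟫ := by
    rw [← real_inner_self_eq_norm_sq, hsym, hPP]
  nlinarith [real_inner_le_norm v (P v), norm_nonneg (P v), norm_nonneg v]

theorem isClosed_grassSet : IsClosed (GrassSet d n) := by
  refine IsClosed.inter (s₁ := {P | ∀ v w, _}) ?_ (IsClosed.inter ?_ ?_)
  · simp only [ofPred_forall]
    exact isClosed_iInter fun v => isClosed_iInter fun w => isClosed_eq (by fun_prop) (by fun_prop)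
  · exact isClosed_eq (continuous_id.clm_comp continuous_id) continuous_id
  · exact isClosed_eq (LinearMap.continuous_of_finiteDimensional
      ((LinearMap.trace ℝ (EuclideanSpace ℝ (Fin n))).comp
        (ContinuousLinearMap.coeLM ℝ))) continuous_const

theorem isCompact_grassSet : IsCompact (GrassSet d n) :=
  (isCompact_closedBall _ _).of_isClosed_subset isClosed_grassSet grassSet_subset_closedBall

instance : CompactSpace (GrassSet d n) :=
  isCompact_iff_compactSpace.mp isCompact_grassSet

end Grassmannian

theorem msupport_eq_support {X : Type*} [TopologicalSpace X] [MeasurableSpace X]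
    (μ : Measure X) : msupport μ = μ.support := by
  ext x
  simp only [msupport, Measure.support_eq_forall_isOpen, mem_ofPred_eq]
  exact forall_congr' fun U => ⟨fun h hx hU => h hU hx, fun h hU hx => h hx hU⟩

theorem Continuous.integrable_of_abs_le {X : Type*} [TopologicalSpace X] [MeasurableSpace X]
    [OpensMeasurableSpace X] {μ : Measure X} [IsFiniteMeasure μ] {f : X → ℝ} (hf : Continuous f)
    {C : ℝ} (hC : ∀ x, |f x| ≤ C) : Integrable f μ :=
  .of_bound hf.aestronglyMeasurable C (.of_forall hC)

section FlatDistance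

variable {X : Type*} [MeasurableSpace X] [PseudoMetricSpace X] {U U' : Set X} {μ ν : Measure X}

theorem flatDistIn_le {c : ℝ} (hc : 0 ≤ c)
    (h : ∀ φ : X → ℝ, LipschitzWith 1 φ → (∀ x, |φ x| ≤ 1) → (∀ x ∉ U, φ x = 0) →
      ∫ x, φ x ∂μ - ∫ x, φ x ∂ν ≤ c) :
    flatDistIn U μ ν ≤ c :=
  Real.sSup_le (by rintro _ ⟨φ, hφ, hb, hU, rfl⟩; exact h φ hφ hb hU) hc

variable [IsFiniteMeasure μ] [IsFiniteMeasure ν]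

theorem flatDistIn_le_of_forall_exists_dist_le {r : ℝ} (hr : 0 ≤ r)
    (hU : ∀ p ∈ U, ∃ q ∉ U, dist p q ≤ r) :
    flatDistIn U μ ν ≤ r * (μ.real U + ν.real U) := by
  refine flatDistIn_le (by positivity) fun φ hφ _ hφU => ?_
  have hbound : ∀ p ∈ U, ‖φ p‖ ≤ r := fun p hp => by
    obtain ⟨q, hq, hpq⟩ := hU p hp
    simpa [hφU q hq, ← dist_eq_norm] using (hφ.dist_le_mul p q).trans (by simpa using hpq)
  have hint : ∀ ρ : Measure X, [IsFiniteMeasure ρ] → |∫ x, φ x ∂ρ| ≤ r * ρ.real U :=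
    fun ρ _ => by
      rw [← setIntegral_eq_integral_of_forall_compl_eq_zero hφU]
      exact norm_setIntegral_le_of_norm_le_const (measure_lt_top ρ U) hbound
  linarith [(abs_le.1 (hint μ)).2, (abs_le.1 (hint ν)).1]

theorem sub_le_flatDistIn {φ : X → ℝ} (hφ : LipschitzWith 1 φ) (hb : ∀ x, |φ x| ≤ 1)
    (hU : ∀ x ∉ U, φ x = 0) : ∫ x, φ x ∂μ - ∫ x, φ x ∂ν ≤ flatDistIn U μ ν := by
  refine le_csSup ⟨μ.real univ + ν.real univ, ?_⟩ ⟨φ, hφ, hb, hU, rfl⟩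
  rintro _ ⟨ψ, -, hψb, -, rfl⟩
  have hint : ∀ ρ : Measure X, [IsFiniteMeasure ρ] → |∫ x, ψ x ∂ρ| ≤ ρ.real univ := fun ρ _ => by
    simpa using norm_integral_le_of_norm_le_const (μ := ρ) (f := ψ) (C := 1) (.of_forall hψb)
  linarith [(abs_le.1 (hint μ)).2, (abs_le.1 (hint ν)).1]

theorem flatDistIn_nonneg : 0 ≤ flatDistIn U μ ν := by
  simpa using sub_le_flatDistIn (U := U) (μ := μ) (ν := ν) (φ := 0)
    (LipschitzWith.const' 0) (by simp) (fun _ _ => rfl)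

theorem flatDistIn_mono (h : U ⊆ U') : flatDistIn U μ ν ≤ flatDistIn U' μ ν :=
  flatDistIn_le flatDistIn_nonneg fun _ hφ hb hU =>
    sub_le_flatDistIn hφ hb fun x hx => hU x (mt (@h x) hx)

theorem flatDistIn_comm : flatDistIn U μ ν = flatDistIn U ν μ := by
  have swap : ∀ (μ ν : Measure X) [IsFiniteMeasure μ] [IsFiniteMeasure ν],
      flatDistIn U μ ν ≤ flatDistIn U ν μ := fun μ ν _ _ =>
    flatDistIn_le flatDistIn_nonneg fun φ hφ hb hU => by
      have := sub_le_flatDistIn (U := U) (μ := ν) (ν := μ) hφ.neg (by simpa using hb)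
        (fun x hx => by simp [hU x hx])
      simp only [Pi.neg_apply, integral_neg] at this
      linarith
  exact le_antisymm (swap μ ν) (swap ν μ)

theorem flatDistIn_map_le [OpensMeasurableSpace X] {Y : Type*} [MeasurableSpace Y]
    [PseudoMetricSpace Y] [BorelSpace Y] {f : X → Y} (hf : LipschitzWith 1 f) :
    flatDistIn univ (μ.map f) (ν.map f) ≤ flatDistIn univ μ ν := by
  refine flatDistIn_le flatDistIn_nonneg fun φ hφ hb _ => ?_
  have hmap : ∀ ρ : Measure X, ∫ y, φ y ∂(ρ.map f) = ∫ x, φ (f x) ∂ρ := fun ρ =>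
    integral_map hf.continuous.measurable.aemeasurable hφ.continuous.aestronglyMeasurable
  rw [hmap, hmap]
  simpa using sub_le_flatDistIn (U := univ) (μ := μ) (ν := ν) (φ := φ ∘ f)
    (by simpa using hφ.comp hf) (fun x => hb (f x)) (by simp)

end FlatDistance

section Eta

variable {X : Type*} [MeasurableSpace X] [PseudoMetricSpace X] {d : ℕ} {μ ν : Measure X}
  {δ : ℝ}

def EtaAdmissible (d : ℕ) (μ ν : Measure X) (δ : ℝ) : Prop :=
  0 < δ ∧ ∀ (x : X) (r : ℝ),
    μ (closedBall x r) ≤ ν (thickening δ (closedBall x r)) + ENNReal.ofReal (δ ^ d) ∧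
    ν (closedBall x r) ≤ μ (thickening δ (closedBall x r)) + ENNReal.ofReal (δ ^ d)

theorem etaDist_eq_sInf : etaDist d μ ν = sInf {δ | EtaAdmissible d μ ν δ} := rfl

theorem etaDist_nonneg : 0 ≤ etaDist d μ ν := by
  rw [etaDist_eq_sInf]
  exact Real.sInf_nonneg fun _ h => h.1.le

theorem etaDist_le (h : EtaAdmissible d μ ν δ) : etaDist d μ ν ≤ δ := by
  rw [etaDist_eq_sInf]
  exact csInf_le ⟨0, fun _ h => h.1.le⟩ h

theorem exists_etaAdmissible_lt (h : EtaAdmissible d μ ν δ) {t : ℝ} (ht : etaDist d μ ν < t) :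
    ∃ δ', EtaAdmissible d μ ν δ' ∧ δ' < t := by
  rw [etaDist_eq_sInf] at ht
  exact exists_lt_of_csInf_lt ⟨δ, h⟩ ht

theorem measure_ball_le_of_etaAdmissible {C₀ : ℝ} (hreg : IsDRegular d C₀ μ) {x : X}
    (hx : x ∈ msupport μ) (hδ : EtaAdmissible d μ ν δ) {r : ℝ} (hr : 0 < r) (hrδ : r + δ ≤ 2) :
    ν (ball x r) ≤ ENNReal.ofReal (C₀ * (r + δ) ^ d) + ENNReal.ofReal (δ ^ d) := by
  have hthick : thickening δ (closedBall x r) ⊆ ball x (r + δ) := fun y hy => by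
    obtain ⟨z, hz, hyz⟩ := mem_thickening_iff.1 hy
    rw [mem_ball]
    linarith [dist_triangle y z x, mem_closedBall.1 hz]
  calc ν (ball x r) ≤ ν (closedBall x r) := measure_mono ball_subset_closedBall
    _ ≤ μ (thickening δ (closedBall x r)) + ENNReal.ofReal (δ ^ d) := ((hδ.2 x r).2)
    _ ≤ μ (ball x (r + δ)) + ENNReal.ofReal (δ ^ d) := by gcongr
    _ ≤ _ := by gcongr; exact (hreg x hx (r + δ) ⟨by linarith [hδ.1], hrδ⟩).2

variable [OpensMeasurableSpace X] [IsFiniteMeasure μ] [IsFiniteMeasure ν]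

theorem measure_le_measure_thickening_add_of_flatDistIn_le {B : Set X} (hB : MeasurableSet B)
    (hδ0 : 0 < δ) (hδ1 : δ ≤ 1) (hF : flatDistIn univ μ ν ≤ δ ^ (d + 1)) :
    μ B ≤ ν (thickening δ B) + ENNReal.ofReal (δ ^ d) := by
  rcases B.eq_empty_or_nonempty with rfl | hBne
  · simp
  set g : X → ℝ := fun y => max 0 (δ - infDist y B)
  have hg : LipschitzWith 1 g := by
    simpa using ((LipschitzWith.const' δ (K := 0)).sub (lipschitz_infDist_pt B)).const_max 0
  have hg0 : ∀ y, 0 ≤ g y := fun y => le_max_left _ _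
  have hgδ : ∀ y, g y ≤ δ := fun y => max_le hδ0.le (by linarith [infDist_nonneg (x := y) (s := B)])
  have hgb : ∀ y, |g y| ≤ 1 := fun y => abs_le.2 ⟨by linarith [hg0 y], (hgδ y).trans hδ1⟩
  have hthick : MeasurableSet (thickening δ B) := isOpen_thickening.measurableSet
  have hlow : δ * μ.real B ≤ ∫ y, g y ∂μ := by
    rw [mul_comm, ← smul_eq_mul, ← integral_indicator_const _ hB]
    refine integral_mono ((integrable_const δ).indicator hB)
      (hg.continuous.integrable_of_abs_le hgb) fun y => ?_
    by_cases hy : y ∈ B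
    · simp [indicator_of_mem hy, g, infDist_zero_of_mem hy, hδ0.le]
    · simpa [indicator_of_notMem hy] using hg0 y
  have hup : ∫ y, g y ∂ν ≤ δ * ν.real (thickening δ B) := by
    rw [mul_comm, ← smul_eq_mul, ← integral_indicator_const _ hthick]
    refine integral_mono (hg.continuous.integrable_of_abs_le hgb)
      ((integrable_const δ).indicator hthick) fun y => ?_
    by_cases hy : y ∈ thickening δ B
    · simpa [indicator_of_mem hy] using hgδ y
    · have : δ ≤ infDist y B := not_lt.1 (mt (mem_thickening_iff_infDist_lt hBne).2 hy)
      rw [indicator_of_notMem hy]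
      exact max_le le_rfl (by linarith)
  have hflat : ∫ y, g y ∂μ - ∫ y, g y ∂ν ≤ δ * δ ^ d :=
    (sub_le_flatDistIn hg hgb fun _ h => absurd (mem_univ _) h).trans
      (by rw [← pow_succ']; exact hF)
  have hreal : μ.real B ≤ ν.real (thickening δ B) + δ ^ d :=
    le_of_mul_le_mul_left (by linarith) hδ0
  rw [← ofReal_measureReal, ← ofReal_measureReal, ← ENNReal.ofReal_add measureReal_nonneg
    (by positivity)]
  exact ENNReal.ofReal_le_ofReal hreal

theorem etaAdmissible_of_flatDistIn_le (hδ0 : 0 < δ) (hδ1 : δ ≤ 1)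
    (hF : flatDistIn univ μ ν ≤ δ ^ (d + 1)) : EtaAdmissible d μ ν δ :=
  ⟨hδ0, fun _ _ =>
    ⟨measure_le_measure_thickening_add_of_flatDistIn_le measurableSet_closedBall hδ0 hδ1 hF,
      measure_le_measure_thickening_add_of_flatDistIn_le measurableSet_closedBall hδ0 hδ1
        (by rwa [flatDistIn_comm] at hF)⟩⟩

end Eta

theorem integral_congr_of_measure_compl_eq_zero {X : Type*} [MeasurableSpace X] {ρ : Measure X}
    {C : Set X} (h : ρ Cᶜ = 0) {f g : X → ℝ} (hfg : EqOn f g C) :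
    ∫ x, f x ∂ρ = ∫ x, g x ∂ρ :=
  integral_congr_ae (.mono (show ∀ᵐ x ∂ρ, x ∈ C from mem_ae_iff.2 h) hfg)

theorem exists_continuous_one_hasCompactSupport {X : Type*} [TopologicalSpace X] [T2Space X]
    [LocallyCompactSpace X] {L : Set X} (hL : IsCompact L) :
    ∃ f : X → ℝ, Continuous f ∧ EqOn f 1 L ∧ HasCompactSupport f ∧ ∀ x, f x ∈ Icc 0 1 := by
  obtain ⟨f, hfL, -, hfc, hf01⟩ :=
    exists_continuous_one_zero_of_isCompact hL isClosed_empty (disjoint_empty L)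
  exact ⟨f, f.continuous, hfL, hfc, hf01⟩

section VagueConvergence

variable {X : Type*} [TopologicalSpace X] [T2Space X] [LocallyCompactSpace X]
  [MeasurableSpace X] {μ : Measure X} {μs : ℕ → Measure X}

theorem tendsto_integral_of_isCompact_measure_compl_eq_zero {C : Set X} (hC : IsCompact C)
    (hμC : μ Cᶜ = 0) (hμsC : ∀ i, μs i Cᶜ = 0)
    (hconv : ∀ f : X → ℝ, Continuous f → HasCompactSupport f →
      Tendsto (fun i => ∫ x, f x ∂μs i) atTop (𝓝 (∫ x, f x ∂μ)))
    {f : X → ℝ} (hf : Continuous f) :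
    Tendsto (fun i => ∫ x, f x ∂μs i) atTop (𝓝 (∫ x, f x ∂μ)) := by
  obtain ⟨β, hβ, hβC, hβc, -⟩ := exists_continuous_one_hasCompactSupport hC
  have hfβ : ∀ {ρ : Measure X}, ρ Cᶜ = 0 → ∫ x, (f * β) x ∂ρ = ∫ x, f x ∂ρ := fun hρ =>
    integral_congr_of_measure_compl_eq_zero hρ fun x hx => by simp [hβC hx]
  simpa only [hfβ hμC, hfβ (hμsC _)] using hconv (f * β) (hf.mul hβ) hβc.mul_left

variable [OpensMeasurableSpace X] [IsFiniteMeasure μ]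

theorem exists_isCompact_superset_measure_compl_eq_zero [SigmaCompactSpace X] {K : Set X}
    (hK : IsCompact K) [∀ i, IsFiniteMeasure (μs i)] (hμsK : ∀ i, μs i Kᶜ = 0)
    (hconv : ∀ f : X → ℝ, Continuous f → HasCompactSupport f →
      Tendsto (fun i => ∫ x, f x ∂μs i) atTop (𝓝 (∫ x, f x ∂μ))) :
    ∃ C, IsCompact C ∧ K ⊆ C ∧ μ Cᶜ = 0 := by
  have hlim : ∀ f : X → ℝ, Continuous f → HasCompactSupport f → EqOn f 1 K →
      Tendsto (fun i => (μs i).real univ) atTop (𝓝 (∫ x, f x ∂μ)) := fun f hf hfc hfK =>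
    (hconv f hf hfc).congr fun i => by
      rw [integral_congr_of_measure_compl_eq_zero (hμsK i) hfK]
      simp
  obtain ⟨f₀, hf₀, hf₀K, hf₀c, hf₀01⟩ := exists_continuous_one_hasCompactSupport hK
  refine ⟨tsupport f₀, hf₀c, fun x hx => subset_tsupport f₀ (by simp [hf₀K hx]), ?_⟩
  have hC : MeasurableSet (tsupport f₀) := (isClosed_tsupport f₀).measurableSet
  -- `∫ g dμ = lim μs(univ)` for every compactly supported continuous `g ≡ 1` on `K`, so for one
  -- that is also `≡ 1` on a given compact `L`; exhausting `X` by compacts bounds `μ univ`.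
  have hcompact : ∀ L, IsCompact L → μ L ≤ ENNReal.ofReal (∫ x, f₀ x ∂μ) := fun L hL => by
    obtain ⟨g, hg, hgLK, hgc, hg01⟩ := exists_continuous_one_hasCompactSupport (hL.union hK)
    have hgf : ∫ x, g x ∂μ = ∫ x, f₀ x ∂μ :=
      tendsto_nhds_unique (hlim g hg hgc fun x hx => hgLK (Or.inr hx)) (hlim f₀ hf₀ hf₀c hf₀K)
    rw [← hgf, ← ofReal_measureReal, ← mul_one (μ.real L), ← smul_eq_mul,
      ← integral_indicator_const _ hL.measurableSet]
    refine ENNReal.ofReal_le_ofReal (integral_mono ((integrable_const 1).indicator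
      hL.measurableSet) (hg.integrable_of_hasCompactSupport hgc) fun x => ?_)
    by_cases hx : x ∈ L
    · simp [indicator_of_mem hx, hgLK (Or.inl hx)]
    · simpa [indicator_of_notMem hx] using (hg01 x).1
  have hf₀C : ∫ x, f₀ x ∂μ ≤ μ.real (tsupport f₀) := by
    rw [← mul_one (μ.real _), ← smul_eq_mul, ← integral_indicator_const _ hC]
    refine integral_mono (hf₀.integrable_of_hasCompactSupport hf₀c)
      ((integrable_const 1).indicator hC) fun x => ?_
    by_cases hx : x ∈ tsupport f₀
    · simpa [indicator_of_mem hx] using (hf₀01 x).2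
    · simp [indicator_of_notMem hx, image_eq_zero_of_notMem_tsupport hx]
  have huniv : μ univ ≤ μ (tsupport f₀) := by
    rw [← iUnion_compactCovering, Monotone.measure_iUnion (compactCovering_subset X)]
    refine iSup_le fun n => (hcompact _ (isCompact_compactCovering X n)).trans ?_
    rw [← ofReal_measureReal]
    exact ENNReal.ofReal_le_ofReal hf₀C
  rw [measure_compl hC (measure_ne_top _ _)]
  exact tsub_eq_zero_of_le huniv

end VagueConvergence

section FlatConvergence

variable {X : Type*} [PseudoMetricSpace X] {C : Set X}

theorem exists_finite_lipschitz_net (hC : TotallyBounded C) {ε : ℝ} (hε : 0 < ε) :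
    ∃ Φ : Set (X → ℝ), Φ.Finite ∧ (∀ ψ ∈ Φ, LipschitzWith 1 ψ ∧ ∀ x, |ψ x| ≤ 1) ∧
      ∀ φ : X → ℝ, LipschitzWith 1 φ → (∀ x, |φ x| ≤ 1) → ∃ ψ ∈ Φ, ∀ x ∈ C, |φ x - ψ x| ≤ ε := by
  -- Restricted to a finite `ε/3`-net `t` of `C`, the test functions fill a bounded set of `t → ℝ`.
  obtain ⟨t, ht, hCt⟩ := totallyBounded_iff.1 hC (ε / 3) (by positivity)
  have := ht.fintype
  set T : Set (X → ℝ) := {φ | LipschitzWith 1 φ ∧ ∀ x, |φ x| ≤ 1}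
  let e : (X → ℝ) → (t → ℝ) := fun φ z => φ z
  have hT : TotallyBounded (e '' T) := by
    refine (isCompact_closedBall (0 : t → ℝ) 1).totallyBounded.subset ?_
    rintro _ ⟨φ, hφ, rfl⟩
    simpa [pi_norm_le_iff_of_nonneg] using fun z _ => hφ.2 z
  obtain ⟨Φ, hΦT, hΦ, hcover⟩ := exists_subset_image_finite_and.1
    (finite_approx_of_totallyBounded hT (ε / 3) (by positivity))
  refine ⟨Φ, hΦ, hΦT, fun φ hφ hb => ?_⟩
  obtain ⟨_, ⟨ψ, hψ, rfl⟩, hφψ⟩ := mem_iUnion₂.1 (hcover ⟨φ, ⟨hφ, hb⟩, rfl⟩)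
  refine ⟨ψ, hψ, fun x hx => ?_⟩
  obtain ⟨z, hz, hxz⟩ := mem_iUnion₂.1 (hCt hx)
  have h1 := hφ.dist_le_mul x z
  have h2 := (hΦT hψ).1.dist_le_mul z x
  have h3 := (dist_le_pi_dist (e φ) (e ψ) ⟨z, hz⟩).trans_lt (mem_ball.1 hφψ)
  rw [mem_ball] at hxz
  simp only [NNReal.coe_one, one_mul, Real.dist_eq] at h1 h2 h3
  rw [dist_comm] at h2
  linarith [abs_sub_le (φ x) (φ z) (ψ x), abs_sub_le (φ z) (ψ z) (ψ x)]

variable [MeasurableSpace X] [OpensMeasurableSpace X]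

theorem abs_integral_sub_integral_le {ρ : Measure X} [IsFiniteMeasure ρ] (hρC : ρ Cᶜ = 0)
    {φ ψ : X → ℝ} (hφ : Continuous φ) (hφb : ∀ x, |φ x| ≤ 1) (hψ : Continuous ψ)
    (hψb : ∀ x, |ψ x| ≤ 1) {ε : ℝ} (hφψ : ∀ x ∈ C, |φ x - ψ x| ≤ ε) :
    |∫ x, φ x ∂ρ - ∫ x, ψ x ∂ρ| ≤ ε * ρ.real univ := by
  rw [← integral_sub (hφ.integrable_of_abs_le hφb) (hψ.integrable_of_abs_le hψb)]
  exact norm_integral_le_of_norm_le_const (f := fun x => φ x - ψ x)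
    (.mono (show ∀ᵐ x ∂ρ, x ∈ C from mem_ae_iff.2 hρC) hφψ)

theorem tendsto_flatDistIn_univ_zero (hC : TotallyBounded C) {μ : Measure X} [IsFiniteMeasure μ]
    {μs : ℕ → Measure X} [∀ i, IsFiniteMeasure (μs i)] (hμC : μ Cᶜ = 0)
    (hμsC : ∀ i, μs i Cᶜ = 0)
    (hconv : ∀ φ : X → ℝ, LipschitzWith 1 φ → (∀ x, |φ x| ≤ 1) →
      Tendsto (fun i => ∫ x, φ x ∂μs i) atTop (𝓝 (∫ x, φ x ∂μ))) :
    Tendsto (fun i => flatDistIn univ μ (μs i)) atTop (𝓝 0) := by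
  refine tendsto_order.2 ⟨fun a ha => .of_forall fun i => ha.trans_le flatDistIn_nonneg,
    fun ε hε => ?_⟩
  set M := μ.real univ
  -- the three error terms below add up to at most `ε' * M + ε' + ε' * (M + 1)`
  set ε' := ε / (2 * M + 4)
  have hε' : 0 < ε' := by positivity
  have hεε' : ε' * (2 * M + 2) < ε := by
    rw [div_mul_eq_mul_div, div_lt_iff₀ (by positivity)]
    nlinarith [measureReal_nonneg (μ := μ) (s := univ)]
  obtain ⟨Φ, hΦ, hΦadm, hnet⟩ := exists_finite_lipschitz_net hC hε'
  have hmass : ∀ᶠ i in atTop, (μs i).real univ < M + 1 := by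
    refine Tendsto.eventually_lt_const (lt_add_one M) ?_
    simpa using hconv (fun _ => 1) (LipschitzWith.const' 1) (by simp)
  have hΦconv : ∀ᶠ i in atTop, ∀ ψ ∈ Φ, dist (∫ x, ψ x ∂μs i) (∫ x, ψ x ∂μ) < ε' :=
    (eventually_all_finite hΦ).2 fun ψ hψ =>
      Metric.tendsto_nhds.1 (hconv ψ (hΦadm ψ hψ).1 (hΦadm ψ hψ).2) ε' hε'
  filter_upwards [hmass, hΦconv] with i hmi hΦi
  refine lt_of_le_of_lt (flatDistIn_le (by positivity) fun φ hφ hφb _ => ?_) hεε'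
  obtain ⟨ψ, hψ, hφψ⟩ := hnet φ hφ hφb
  have hψφ : ∀ x ∈ C, |ψ x - φ x| ≤ ε' := fun x hx => abs_sub_comm (φ x) (ψ x) ▸ hφψ x hx
  have h1 := abs_integral_sub_integral_le hμC hφ.continuous hφb
    (hΦadm ψ hψ).1.continuous (hΦadm ψ hψ).2 hφψ
  have h2 := abs_integral_sub_integral_le (hμsC i) (hΦadm ψ hψ).1.continuous
    (hΦadm ψ hψ).2 hφ.continuous hφb hψφ
  have h3 := hΦi ψ hψ
  rw [Real.dist_eq] at h3
  have h4 : ε' * (μs i).real univ ≤ ε' * (M + 1) := by gcongr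
  linarith [(abs_le.1 h1).2, (abs_le.1 h2).2, (abs_lt.1 h3).1]

end FlatConvergence

theorem exists_dist_le_notMem_ball {E : Type*} [NormedAddCommGroup E] [NormedSpace ℝ E]
    [Nontrivial E] (x p : E) {r : ℝ} (hr : 0 ≤ r) : ∃ q ∉ ball x r, dist p q ≤ r := by
  obtain ⟨u, hu⟩ := exists_norm_eq E hr
  -- `p + u` and `p - u` are `2r` apart, so one of them is at distance `≥ r` from `x`.
  by_cases h : p + u ∈ ball x r
  · refine ⟨p - u, fun h' => ?_, by simp [hu]⟩
    rw [mem_ball, dist_eq_norm] at h h'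
    have : ‖(p + u - x) - (p - u - x)‖ = 2 * r := by
      rw [show p + u - x - (p - u - x) = (2 : ℝ) • u by module, norm_smul, hu]; simp
    linarith [norm_sub_le (p + u - x) (p - u - x)]
  · exact ⟨p + u, h, by simp [hu]⟩

theorem flatDistIn_ball_prod_le {E Y : Type*} [NormedAddCommGroup E] [NormedSpace ℝ E]
    [Nontrivial E] [PseudoMetricSpace Y] [MeasurableSpace (E × Y)] {μ ν : Measure (E × Y)}
    [IsFiniteMeasure μ] [IsFiniteMeasure ν] (x : E) {r : ℝ} (hr : 0 ≤ r) :
    flatDistIn (ball x r ×ˢ univ) μ ν ≤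
      r * (μ.real (ball x r ×ˢ univ) + ν.real (ball x r ×ˢ univ)) := by
  refine flatDistIn_le_of_forall_exists_dist_le hr fun p _ => ?_
  obtain ⟨q, hq, hpq⟩ := exists_dist_le_notMem_ball x p.1 hr
  exact ⟨(q, p.2), fun h => hq (mem_prod.1 h).1, by simpa [Prod.dist_eq] using hpq⟩

section Varifold

variable {d n : ℕ} (V W : Measure (VarSpace d n))

theorem varMass_real_apply {s : Set (EuclideanSpace ℝ (Fin n))} (hs : MeasurableSet s) :
    (varMass V).real s = V.real (s ×ˢ univ) := by
  rw [measureReal_def, measureReal_def, varMass, Measure.map_apply measurable_fst hs, prod_univ]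

variable [IsFiniteMeasure V] [IsFiniteMeasure W]

instance : IsFiniteMeasure (varMass V) := by
  unfold varMass; infer_instance

theorem flatDistIn_varMass_le : flatDistIn univ (varMass V) (varMass W) ≤ flatDistIn univ V W :=
  flatDistIn_map_le LipschitzWith.prod_fst

theorem etaAdmissible_one_of_flatDistIn_le_one (hF : flatDistIn univ V W ≤ 1) :
    EtaAdmissible d (varMass V) (varMass W) 1 :=
  etaAdmissible_of_flatDistIn_le one_pos le_rfl
    (by simpa using (flatDistIn_varMass_le V W).trans hF)

theorem varDelta_nonneg : 0 ≤ varDelta V W := by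
  refine Real.sSup_nonneg ?_
  rintro _ ⟨x, -, r, hr, rfl⟩
  have : 0 ≤ etaDist d (varMass V) (varMass W) := etaDist_nonneg
  exact div_nonneg flatDistIn_nonneg (by positivity)

theorem flatDistIn_ball_le_of_etaAdmissible_one (hn : 0 < n) {C₀ : ℝ} (hC₀ : 0 ≤ C₀)
    (hreg : IsDRegular d C₀ (varMass V)) (h1 : EtaAdmissible d (varMass V) (varMass W) 1)
    {x : EuclideanSpace ℝ (Fin n)} (hx : x ∈ msupport (varMass V)) {r : ℝ} (hr : 0 < r)
    (hr2 : r ≤ 1 / 2) :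
    flatDistIn (ball x r ×ˢ univ) V W ≤
      r * (C₀ * (1 + 2 ^ d) + 1) * (etaDist d (varMass V) (varMass W) + r) ^ d := by
  have : NeZero n := ⟨hn.ne'⟩
  set η := etaDist d (varMass V) (varMass W)
  have hη0 : 0 ≤ η := etaDist_nonneg
  have hη1 : η ≤ 1 := etaDist_le h1
  obtain ⟨δ, hδ, hδη⟩ := exists_etaAdmissible_lt h1 (lt_add_of_pos_right η hr)
  have hδ0 := hδ.1
  have hV : (varMass V).real (ball x r) ≤ C₀ * r ^ d :=
    ENNReal.toReal_le_of_le_ofReal (by positivity) (hreg x hx r ⟨hr, by linarith⟩).2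
  have hW : (varMass W).real (ball x r) ≤ C₀ * (r + δ) ^ d + δ ^ d := by
    refine ENNReal.toReal_le_of_le_ofReal (by positivity) ?_
    rw [ENNReal.ofReal_add (by positivity) (by positivity)]
    exact measure_ball_le_of_etaAdmissible hreg hx hδ hr (by linarith)
  have hrη : r ^ d ≤ (η + r) ^ d := by gcongr; linarith
  have hrδ : (r + δ) ^ d ≤ 2 ^ d * (η + r) ^ d := by
    rw [← mul_pow]; gcongr; linarith
  have hδη' : δ ^ d ≤ (η + r) ^ d := by gcongr
  calc flatDistIn (ball x r ×ˢ univ) V W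
      ≤ r * ((varMass V).real (ball x r) + (varMass W).real (ball x r)) := by
        simpa only [varMass_real_apply _ measurableSet_ball] using
          flatDistIn_ball_prod_le (μ := V) (ν := W) x hr.le
    _ ≤ r * (C₀ * r ^ d + (C₀ * (r + δ) ^ d + δ ^ d)) := by gcongr
    _ ≤ r * (C₀ * (1 + 2 ^ d) + 1) * (η + r) ^ d := by
        rw [mul_assoc]
        gcongr
        nlinarith [mul_le_mul_of_nonneg_left hrη hC₀, mul_le_mul_of_nonneg_left hrδ hC₀]

theorem varDelta_le (hn : 0 < n) {C₀ : ℝ} (hC₀ : 0 ≤ C₀) (hreg : IsDRegular d C₀ (varMass V))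
    (hF : flatDistIn univ V W ≤ 1) {r₀ : ℝ} (hr₀ : 0 < r₀) (hr₀' : r₀ ≤ 1 / 2) :
    varDelta V W ≤ (C₀ * (1 + 2 ^ d) + 1) * r₀ + flatDistIn univ V W / r₀ ^ d := by
  set c := C₀ * (1 + 2 ^ d) + 1
  set F := flatDistIn univ V W
  have hc : 0 < c := by positivity
  have hF0 : 0 ≤ F := flatDistIn_nonneg
  refine Real.sSup_le ?_ (by positivity)
  rintro _ ⟨x, hx, r, hr, rfl⟩
  set η := etaDist d (varMass V) (varMass W)
  have hη : 0 ≤ η := etaDist_nonneg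
  have hηr : 0 < η + r := by linarith
  rw [div_le_iff₀ (by positivity)]
  rcases le_or_gt r r₀ with hrr₀ | hr₀r
  · calc flatDistIn (ball x r ×ˢ univ) V W ≤ r * c * (η + r) ^ d :=
          flatDistIn_ball_le_of_etaAdmissible_one V W hn hC₀ hreg
            (etaAdmissible_one_of_flatDistIn_le_one V W hF) hx hr (hrr₀.trans hr₀')
      _ ≤ (c * r₀ + F / r₀ ^ d) * (η + r) ^ d := by
          gcongr
          nlinarith [div_nonneg hF0 (pow_pos hr₀ d).le, mul_le_mul_of_nonneg_right hrr₀ hc.le]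
  · calc flatDistIn (ball x r ×ˢ univ) V W ≤ F := flatDistIn_mono (subset_univ _)
      _ = F / r₀ ^ d * r₀ ^ d := by field_simp
      _ ≤ (c * r₀ + F / r₀ ^ d) * (η + r) ^ d := by
          gcongr
          · linarith [mul_pos hc hr₀]
          · linarith

theorem tendsto_varDelta_zero_of_tendsto_flatDistIn (Vi : ℕ → Measure (VarSpace d n))
    [∀ i, IsFiniteMeasure (Vi i)] (hn : 0 < n) {C₀ : ℝ} (hC₀ : 0 ≤ C₀)
    (hreg : IsDRegular d C₀ (varMass V))
    (hF : Tendsto (fun i => flatDistIn univ V (Vi i)) atTop (𝓝 0)) :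
    Tendsto (fun i => varDelta V (Vi i)) atTop (𝓝 0) := by
  refine tendsto_order.2 ⟨fun a ha => .of_forall fun i => ha.trans_le (varDelta_nonneg _ _),
    fun ε hε => ?_⟩
  set c := C₀ * (1 + 2 ^ d) + 1
  have hc : 0 < c := by positivity
  set r₀ := min (1 / 2) (ε / (2 * c))
  have hr₀ : 0 < r₀ := lt_min one_half_pos (by positivity)
  have hcr₀ : c * r₀ ≤ ε / 2 := by
    calc c * r₀ ≤ c * (ε / (2 * c)) := by gcongr; exact min_le_right _ _
      _ = ε / 2 := by field_simp
  have hF' : Tendsto (fun i => flatDistIn univ V (Vi i) / r₀ ^ d) atTop (𝓝 0) := by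
    simpa using hF.div_const (r₀ ^ d)
  filter_upwards [hF.eventually_le_const one_pos, hF'.eventually_lt_const (half_pos hε)]
    with i hF1 hF2
  calc varDelta V (Vi i) ≤ c * r₀ + flatDistIn univ V (Vi i) / r₀ ^ d :=
        varDelta_le V (Vi i) hn hC₀ hreg hF1 hr₀ (min_le_left _ _)
    _ < ε := by linarith

end Varifold

theorem stmt12 (d n : ℕ) (hd : 1 ≤ d) (hdn : d ≤ n) (C₀ : ℝ) (hC₀ : 1 ≤ C₀)
    (V : Measure (VarSpace d n)) [IsFiniteMeasure V]
    (hreg : IsDRegular d C₀ (varMass V))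
    (Vi : ℕ → Measure (VarSpace d n)) (hfin : ∀ i, IsFiniteMeasure (Vi i))
    (K : Set (EuclideanSpace ℝ (Fin n))) (hK : IsCompact K)
    (hsupp : ∀ i, msupport (Vi i) ⊆ K ×ˢ (Set.univ : Set ↥(GrassSet d n)))
    (hconv : ∀ f : VarSpace d n → ℝ, Continuous f → HasCompactSupport f →
      Filter.Tendsto (fun i => ∫ p, f p ∂(Vi i)) Filter.atTop (nhds (∫ p, f p ∂V))) :
    Filter.Tendsto (fun i => varDelta V (Vi i)) Filter.atTop (nhds 0) := by
  have hn : 0 < n := by omega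
  have := hfin
  have hViK : ∀ i, Vi i (K ×ˢ univ)ᶜ = 0 := fun i =>
    measure_mono_null (compl_subset_compl.2 (hsupp i))
      (msupport_eq_support (Vi i) ▸ Measure.measure_compl_support)
  obtain ⟨C, hC, hKC, hVC⟩ :=
    exists_isCompact_superset_measure_compl_eq_zero (hK.prod isCompact_univ) hViK hconv
  have hViC : ∀ i, Vi i Cᶜ = 0 := fun i => measure_mono_null (compl_subset_compl.2 hKC) (hViK i)
  have hF : Tendsto (fun i => flatDistIn univ V (Vi i)) atTop (𝓝 0) :=
    tendsto_flatDistIn_univ_zero hC.totallyBounded hVC hViC fun _ hφ _ =>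
      tendsto_integral_of_isCompact_measure_compl_eq_zero hC hVC hViC hconv hφ.continuous
  exact tendsto_varDelta_zero_of_tendsto_flatDistIn V Vi hn (by linarith) hreg hF

end
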